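/- The centrally extended bracket [φ⊗Uⁿ, ψ⊗Uᵐ] = (φ·Uⁿψ − ψ·Uᵐφ)⊗U^{n+m} + n·δ_{n+m,0}·(∫_X φ·Uⁿψ dμ)·c on the space A(X,T) ⊕ ℂc defines a Lie algebra (bracket is antisymmetric, bilinear, and satisfies the Jacobi identity), and ℂc lies in its center. -/

import Mathlib

noncomputable section
open MeasureTheory

variable {X : Type*} [TopologicalSpace X] [MeasurableSpace X]

/-- `n`-th iterate of a homeomorphism, `n : ℕ`. -/
def iterH (T : X ≃ₜ X) : ℕ → X ≃ₜ X
  | 0 => Homeomorph.refl X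
  | n + 1 => (iterH T n).trans T

/-- `n`-th power of a homeomorphism, `n : ℤ` (so `zpowH T n = Tⁿ`). -/
def zpowH (T : X ≃ₜ X) : ℤ → X ≃ₜ X
  | Int.ofNat n => iterH T n
  | Int.negSucc n => (iterH T (n + 1)).symm

/-- The operator `Uⁿ` on continuous functions: `(Uⁿψ)(x) = ψ(Tⁿ x)`. -/
def Un (T : X ≃ₜ X) (n : ℤ) (ψ : C(X, ℂ)) : C(X, ℂ) := ψ.comp (zpowH T n)

/-- The crossed product multiplication on `A(X,T) = ⊕ₙ C(X) ⊗ Uⁿ`,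
`(φ⊗Uⁿ)·(ψ⊗Uᵐ) = (φ·Uⁿψ)⊗U^(n+m)`; the element `φ⊗Uⁿ` is `Finsupp.single n φ`. -/
def amul (T : X ≃ₜ X) (a b : ℤ →₀ C(X, ℂ)) : ℤ →₀ C(X, ℂ) :=
  a.sum fun n φ => b.sum fun m ψ => Finsupp.single (n + m) (φ * Un T n ψ)
/-- The Lie bracket `[a,b] = ab - ba` on `A(X,T)`. -/
def abr (T : X ≃ₜ X) (a b : ℤ →₀ C(X, ℂ)) : ℤ →₀ C(X, ℂ) := amul T a b - amul T b a
/-- The 2-cocycle `α(φ⊗Uⁿ, ψ⊗Uᵐ) = n·δ_{n+m,0}·∫ φ·Uⁿψ dμ`, extended bilinearly. -/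
def acoc (T : X ≃ₜ X) (μ : Measure X) (a b : ℤ →₀ C(X, ℂ)) : ℂ :=
  a.sum fun n φ => b.sum fun m ψ =>
    if n + m = 0 then (n : ℂ) * ∫ x, (φ * Un T n ψ) x ∂μ else 0
/-- The centrally extended bracket on `Ã(X,T) = A(X,T) ⊕ ℂc` (the central element `c`
is `(0, 1)`): `[a,b] = (ab - ba, α(a,b))`. -/
def brE (T : X ≃ₜ X) (μ : Measure X) (a b : (ℤ →₀ C(X, ℂ)) × ℂ) : (ℤ →₀ C(X, ℂ)) × ℂ :=
  (abr T a.1 b.1, acoc T μ a.1 b.1)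

/-!
The crossed product `A(X,T) = ⊕ₙ C(X) ⊗ Uⁿ` is an associative algebra, so its commutator is a
Lie bracket. The cocycle is `α(a, b) = τ(D a · b)`, where `τ(a) = ∫ a₀ dμ` is a trace because `μ`
is `T`-invariant, and `D(φ ⊗ Uⁿ) = n φ ⊗ Uⁿ` is a derivation with `τ ∘ D = 0`. For any such `τ`
and `D`, `τ(D(ab)) = 0` makes `α` antisymmetric, and `τ(D(abc)) = τ(D(acb)) = 0` give the
cocycle identity, which is the Jacobi identity of the extended bracket.
-/

namespace Finsupp

variable {R ι κ M N P : Type*} [CommSemiring R] [AddCommMonoid M] [Module R M]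
  [AddCommMonoid N] [Module R N] [AddCommMonoid P] [Module R P]

def lsum₂ (B : ι → κ → M →ₗ[R] N →ₗ[R] P) : (ι →₀ M) →ₗ[R] (κ →₀ N) →ₗ[R] P :=
  Finsupp.lsum R fun n => (Finsupp.lsum R).toLinearMap ∘ₗ LinearMap.pi (B n)

theorem lsum₂_apply (B : ι → κ → M →ₗ[R] N →ₗ[R] P) (a : ι →₀ M) (b : κ →₀ N) :
    lsum₂ B a b = a.sum fun n φ => b.sum fun m ψ => B n m φ ψ := by
  simp [lsum₂, Finsupp.lsum_apply]

theorem lsum₂_single_single (B : ι → κ → M →ₗ[R] N →ₗ[R] P) (n : ι) (φ : M) (m : κ) (ψ : N) :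
    lsum₂ B (single n φ) (single m ψ) = B n m φ ψ := by
  simp [lsum₂]

end Finsupp

section Commutator

variable {A : Type*} [NonUnitalRing A]

theorem commutator_jacobi (a b c : A) :
    (a * b - b * a) * c - c * (a * b - b * a) + ((b * c - c * b) * a - a * (b * c - c * b))
      + ((c * a - a * c) * b - b * (c * a - a * c)) = 0 := by
  noncomm_ring

section Trace
variable {G : Type*} [AddCommGroup G]
  (τ : A →+ G) (hτ : ∀ a b, τ (a * b) = τ (b * a))
  (D : A →+ A) (hD : ∀ a b, D (a * b) = D a * b + a * D b) (hτD : ∀ a, τ (D a) = 0)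
include hτ hD hτD

theorem trace_derivation_mul_antisymm (a b : A) : τ (D a * b) = -τ (D b * a) := by
  have := hτD (a * b)
  rw [hD, map_add, hτ a] at this
  exact eq_neg_of_add_eq_zero_left this

theorem trace_derivation_mul_cyclic (a b c : A) :
    τ (D a * (b * c)) + τ (D b * (c * a)) + τ (D c * (a * b)) = 0 := by
  -- the Leibniz expansion of `τ (D (a * (b * c))) = 0`, its last two terms rotated by `hτ`
  have := hτD (a * (b * c))
  rw [hD, hD, mul_add, map_add, map_add, hτ a, ← mul_assoc a b, hτ (a * b), mul_assoc (D b)]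
    at this
  rwa [add_assoc]

theorem trace_derivation_cocycle (a b c : A) :
    τ (D (a * b - b * a) * c) + τ (D (b * c - c * b) * a) + τ (D (c * a - a * c) * b) = 0 := by
  have h_abc := trace_derivation_mul_cyclic τ hτ D hD hτD a b c
  have h_acb := trace_derivation_mul_cyclic τ hτ D hD hτD a c b
  rw [trace_derivation_mul_antisymm τ hτ D hD hτD (a * b - b * a),
    trace_derivation_mul_antisymm τ hτ D hD hτD (b * c - c * b),
    trace_derivation_mul_antisymm τ hτ D hD hτD (c * a - a * c)]
  simp only [mul_sub, map_sub]
  calc _ = (τ (D a * (c * b)) + τ (D c * (b * a)) + τ (D b * (a * c)))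
        - (τ (D a * (b * c)) + τ (D b * (c * a)) + τ (D c * (a * b))) := by abel
    _ = 0 := by rw [h_abc, h_acb, sub_zero]

end Trace

end Commutator

section DegreeDerivation

variable (R : Type*) {M : Type*} [CommRing R] [AddCommGroup M] [Module R M]

def degDeriv : (ℤ →₀ M) →ₗ[R] (ℤ →₀ M) :=
  Finsupp.lsum R fun n => n • Finsupp.lsingle n

@[simp] theorem degDeriv_single (n : ℤ) (φ : M) :
    degDeriv R (Finsupp.single n φ) = Finsupp.single n (n • φ) := by
  simp only [degDeriv, Finsupp.lsum_single, LinearMap.smul_apply, Finsupp.lsingle_apply,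
    Finsupp.smul_single]

end DegreeDerivation

section CrossedProduct

omit [MeasurableSpace X]

theorem iterH_eq_pow (T : X ≃ₜ X) (n : ℕ) : iterH T n = T ^ n := by
  induction n with
  | zero => rfl
  | succ n ih => rw [pow_succ', ← ih]; rfl

theorem zpowH_eq_zpow (T : X ≃ₜ X) (n : ℤ) : zpowH T n = T ^ n := by
  cases n with
  | ofNat n => exact iterH_eq_pow T n
  | negSucc n => rw [zpow_negSucc, ← iterH_eq_pow]; rfl

variable (T : X ≃ₜ X)

@[simp] theorem Un_apply (n : ℤ) (ψ : C(X, ℂ)) (x : X) : Un T n ψ x = ψ ((T ^ n) x) := by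
  rw [Un, ← zpowH_eq_zpow]; rfl

@[simp] theorem Un_zero (ψ : C(X, ℂ)) : Un T 0 ψ = ψ := by ext; simp

theorem Un_Un (n m : ℤ) (ψ : C(X, ℂ)) : Un T n (Un T m ψ) = Un T (n + m) ψ := by
  ext; simp [add_comm n, zpow_add]

@[simp] theorem Un_add (n : ℤ) (φ ψ : C(X, ℂ)) : Un T n (φ + ψ) = Un T n φ + Un T n ψ := rfl

@[simp] theorem Un_mul (n : ℤ) (φ ψ : C(X, ℂ)) : Un T n (φ * ψ) = Un T n φ * Un T n ψ := rfl

@[simp] theorem Un_smul (n : ℤ) (s : ℂ) (ψ : C(X, ℂ)) : Un T n (s • ψ) = s • Un T n ψ := rfl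

@[simp] theorem Un_zsmul (n k : ℤ) (ψ : C(X, ℂ)) : Un T n (k • ψ) = k • Un T n ψ := rfl

def amulₗ : (ℤ →₀ C(X, ℂ)) →ₗ[ℂ] (ℤ →₀ C(X, ℂ)) →ₗ[ℂ] (ℤ →₀ C(X, ℂ)) :=
  Finsupp.lsum₂ fun n m => LinearMap.mk₂ ℂ (fun φ ψ => Finsupp.single (n + m) (φ * Un T n ψ))
    (fun _ _ _ => by rw [add_mul, Finsupp.single_add])
    (fun _ _ _ => by rw [smul_mul_assoc, Finsupp.smul_single])
    (fun _ _ _ => by rw [Un_add, mul_add, Finsupp.single_add])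
    (fun _ _ _ => by rw [Un_smul, mul_smul_comm, Finsupp.smul_single])

theorem amul_eq_amulₗ (a b : ℤ →₀ C(X, ℂ)) : amul T a b = amulₗ T a b := by
  rw [amulₗ, Finsupp.lsum₂_apply]; rfl

theorem amul_single_single (n m : ℤ) (φ ψ : C(X, ℂ)) :
    amul T (Finsupp.single n φ) (Finsupp.single m ψ) = Finsupp.single (n + m) (φ * Un T n ψ) := by
  rw [amul_eq_amulₗ, amulₗ, Finsupp.lsum₂_single_single]; rfl

theorem amul_add_left (a a' b : ℤ →₀ C(X, ℂ)) : amul T (a + a') b = amul T a b + amul T a' b := by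
  simp only [amul_eq_amulₗ, map_add, LinearMap.add_apply]

theorem amul_add_right (a b b' : ℤ →₀ C(X, ℂ)) : amul T a (b + b') = amul T a b + amul T a b' := by
  simp only [amul_eq_amulₗ, map_add]

theorem amul_smul_left (s : ℂ) (a b : ℤ →₀ C(X, ℂ)) : amul T (s • a) b = s • amul T a b := by
  simp only [amul_eq_amulₗ, map_smul, LinearMap.smul_apply]

theorem amul_smul_right (s : ℂ) (a b : ℤ →₀ C(X, ℂ)) : amul T a (s • b) = s • amul T a b := by
  simp only [amul_eq_amulₗ, map_smul]

@[simp] theorem amul_zero_left (b : ℤ →₀ C(X, ℂ)) : amul T 0 b = 0 := by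
  simp only [amul_eq_amulₗ, map_zero, LinearMap.zero_apply]

@[simp] theorem amul_zero_right (a : ℤ →₀ C(X, ℂ)) : amul T a 0 = 0 := by
  simp only [amul_eq_amulₗ, map_zero]

theorem amul_assoc (a b c : ℤ →₀ C(X, ℂ)) : amul T (amul T a b) c = amul T a (amul T b c) := by
  induction a using Finsupp.induction_linear with
  | zero => simp
  | add a a' ha ha' => simp only [amul_add_left, ha, ha']
  | single n φ =>
  induction b using Finsupp.induction_linear with
  | zero => simp
  | add b b' hb hb' => simp only [amul_add_left, amul_add_right, hb, hb']
  | single m ψ =>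
  induction c using Finsupp.induction_linear with
  | zero => simp
  | add c c' hc hc' => simp only [amul_add_right, hc, hc']
  | single k χ => simp only [amul_single_single, Un_mul, Un_Un, add_assoc, mul_assoc]

-- `A(X,T)` with `amul` as multiplication; `abr T a b` is then `a * b - b * a` by definition.
def CrossedProduct (_T : X ≃ₜ X) : Type _ := ℤ →₀ C(X, ℂ)

instance : AddCommGroup (CrossedProduct T) := inferInstanceAs (AddCommGroup (ℤ →₀ C(X, ℂ)))

instance : NonUnitalRing (CrossedProduct T) :=
  { (inferInstance : AddCommGroup (CrossedProduct T)) with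
    mul := amul T
    left_distrib := amul_add_right T
    right_distrib := amul_add_left T
    zero_mul := amul_zero_left T
    mul_zero := amul_zero_right T
    mul_assoc := amul_assoc T }

theorem degDeriv_amul (a b : ℤ →₀ C(X, ℂ)) :
    degDeriv ℂ (amul T a b) = amul T (degDeriv ℂ a) b + amul T a (degDeriv ℂ b) := by
  have : (amulₗ T).compr₂ (degDeriv ℂ) = amulₗ T ∘ₗ degDeriv ℂ + (amulₗ T).compl₂ (degDeriv ℂ) := by
    ext n φ m ψ : 4
    simp only [LinearMap.compr₂_apply, LinearMap.add_apply, LinearMap.comp_apply,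
      LinearMap.compl₂_apply, Finsupp.lsingle_apply, ← amul_eq_amulₗ, amul_single_single,
      degDeriv_single, Un_zsmul, smul_mul_assoc, mul_smul_comm, ← Finsupp.single_add]
    rw [add_zsmul]
  simpa only [amul_eq_amulₗ, LinearMap.compr₂_apply, LinearMap.add_apply, LinearMap.comp_apply,
      LinearMap.compl₂_apply] using LinearMap.congr_fun₂ this a b

end CrossedProduct

section Integral

variable (T : X ≃ₜ X) (μ : Measure X)

theorem integral_Un (hinv : ∀ f : C(X, ℂ), ∫ x, f (T x) ∂μ = ∫ x, f x ∂μ) (n : ℤ) (f : C(X, ℂ)) :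
    ∫ x, Un T n f x ∂μ = ∫ x, f x ∂μ := by
  have h_one (g : C(X, ℂ)) : ∫ x, Un T 1 g x ∂μ = ∫ x, g x ∂μ := by
    simpa using hinv g
  have h_neg_one (g : C(X, ℂ)) : ∫ x, Un T (-1) g x ∂μ = ∫ x, g x ∂μ := by
    simpa using (hinv (Un T (-1) g)).symm
  induction n using Int.induction_on with
  | zero => simp
  | succ n ih => rw [add_comm, ← Un_Un, h_one, ih]
  | pred n ih => rw [sub_eq_neg_add, ← Un_Un, h_neg_one, ih]

variable [CompactSpace X] [OpensMeasurableSpace X] [IsFiniteMeasure μ]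

theorem integrable_continuousMap (f : C(X, ℂ)) : Integrable f μ :=
  (BoundedContinuousFunction.mkOfCompact f).integrable μ

def integralₗ : C(X, ℂ) →ₗ[ℂ] ℂ where
  toFun f := ∫ x, f x ∂μ
  map_add' f g := integral_add (integrable_continuousMap μ f) (integrable_continuousMap μ g)
  map_smul' s f := integral_smul s f

theorem integralₗ_apply (f : C(X, ℂ)) : integralₗ μ f = ∫ x, f x ∂μ := rfl

def crossedTrace : (ℤ →₀ C(X, ℂ)) →ₗ[ℂ] ℂ := integralₗ μ ∘ₗ Finsupp.lapply 0

end Integral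

section Cocycle

variable [CompactSpace X] [OpensMeasurableSpace X] (T : X ≃ₜ X) (μ : Measure X) [IsFiniteMeasure μ]

theorem crossedTrace_single (k : ℤ) (f : C(X, ℂ)) :
    crossedTrace μ (Finsupp.single k f) = if k = 0 then integralₗ μ f else 0 := by
  by_cases hk : k = 0 <;> simp [crossedTrace, hk]

theorem crossedTrace_degDeriv (a : ℤ →₀ C(X, ℂ)) : crossedTrace μ (degDeriv ℂ a) = 0 := by
  have : crossedTrace μ ∘ₗ degDeriv ℂ = 0 := by
    ext k φ : 2
    simp only [LinearMap.comp_apply, LinearMap.zero_apply, Finsupp.lsingle_apply, degDeriv_single,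
      crossedTrace_single]
    split_ifs with hk
    · rw [hk, zero_zsmul, map_zero]
    · rfl
  exact LinearMap.congr_fun this a

theorem crossedTrace_amul_comm (hinv : ∀ f : C(X, ℂ), ∫ x, f (T x) ∂μ = ∫ x, f x ∂μ)
    (a b : ℤ →₀ C(X, ℂ)) : crossedTrace μ (amul T a b) = crossedTrace μ (amul T b a) := by
  have : (amulₗ T).compr₂ (crossedTrace μ) = ((amulₗ T).compr₂ (crossedTrace μ)).flip := by
    ext n φ m ψ : 4
    simp only [LinearMap.compr₂_apply, LinearMap.flip_apply, LinearMap.comp_apply,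
      Finsupp.lsingle_apply, ← amul_eq_amulₗ, amul_single_single, crossedTrace_single, add_comm m n]
    split_ifs with h
    · rw [integralₗ_apply, integralₗ_apply, ← integral_Un T μ hinv m, Un_mul, Un_Un,
        add_comm m n, h, Un_zero, mul_comm]
    · rfl
  simpa only [amul_eq_amulₗ, LinearMap.compr₂_apply, LinearMap.flip_apply]
    using LinearMap.congr_fun₂ this a b

def acocₗ : (ℤ →₀ C(X, ℂ)) →ₗ[ℂ] (ℤ →₀ C(X, ℂ)) →ₗ[ℂ] ℂ :=
  Finsupp.lsum₂ fun n m => LinearMap.mk₂ ℂ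
    (fun φ ψ => if n + m = 0 then (n : ℂ) * ∫ x, (φ * Un T n ψ) x ∂μ else 0)
    (fun _ _ _ => by split_ifs <;> simp only [← integralₗ_apply, add_mul, map_add, mul_add, add_zero])
    (fun _ _ _ => by
      split_ifs <;> simp only [← integralₗ_apply, smul_mul_assoc, map_smul, smul_eq_mul, mul_zero,
        mul_left_comm])
    (fun _ _ _ => by
      split_ifs <;> simp only [← integralₗ_apply, Un_add, mul_add, map_add, add_zero])
    (fun _ _ _ => by
      split_ifs <;> simp only [← integralₗ_apply, Un_smul, mul_smul_comm, map_smul, smul_eq_mul,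
        mul_zero, mul_left_comm])

theorem acoc_eq_acocₗ (a b : ℤ →₀ C(X, ℂ)) : acoc T μ a b = acocₗ T μ a b := by
  rw [acocₗ, Finsupp.lsum₂_apply]; rfl

theorem acoc_eq_crossedTrace (a b : ℤ →₀ C(X, ℂ)) :
    acoc T μ a b = crossedTrace μ (amul T (degDeriv ℂ a) b) := by
  have : acocₗ T μ = (amulₗ T ∘ₗ degDeriv ℂ).compr₂ (crossedTrace μ) := by
    ext n φ m ψ : 4
    simp only [acocₗ, Finsupp.lsum₂_single_single, LinearMap.compr₂_apply, LinearMap.comp_apply,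
      Finsupp.lsingle_apply, LinearMap.mk₂_apply, degDeriv_single, ← amul_eq_amulₗ,
      amul_single_single, crossedTrace_single]
    rw [smul_mul_assoc, map_zsmul, zsmul_eq_mul, integralₗ_apply]
  simpa only [acoc_eq_acocₗ, amul_eq_amulₗ, LinearMap.compr₂_apply, LinearMap.comp_apply]
    using LinearMap.congr_fun₂ this a b

theorem acoc_antisymm (hinv : ∀ f : C(X, ℂ), ∫ x, f (T x) ∂μ = ∫ x, f x ∂μ)
    (a b : ℤ →₀ C(X, ℂ)) : acoc T μ a b = -acoc T μ b a := by
  simp only [acoc_eq_crossedTrace]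
  exact trace_derivation_mul_antisymm (A := CrossedProduct T) (crossedTrace μ).toAddMonoidHom
    (crossedTrace_amul_comm T μ hinv) (degDeriv ℂ).toAddMonoidHom (degDeriv_amul T)
    (crossedTrace_degDeriv μ) a b

theorem acoc_cocycle (hinv : ∀ f : C(X, ℂ), ∫ x, f (T x) ∂μ = ∫ x, f x ∂μ)
    (a b c : ℤ →₀ C(X, ℂ)) :
    acoc T μ (abr T a b) c + acoc T μ (abr T b c) a + acoc T μ (abr T c a) b = 0 := by
  simp only [acoc_eq_crossedTrace]
  exact trace_derivation_cocycle (A := CrossedProduct T) (crossedTrace μ).toAddMonoidHom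
    (crossedTrace_amul_comm T μ hinv) (degDeriv ℂ).toAddMonoidHom (degDeriv_amul T)
    (crossedTrace_degDeriv μ) a b c

end Cocycle

theorem brE_central (T : X ≃ₜ X) (μ : Measure X) (t : ℂ) (b : (ℤ →₀ C(X, ℂ)) × ℂ) :
    brE T μ ((0 : ℤ →₀ C(X, ℂ)), t) b = 0 :=
  Prod.ext (by ext; simp [brE, abr]) (by simp [brE, acoc])

section ExtendedBracket

variable [CompactSpace X] [OpensMeasurableSpace X] (T : X ≃ₜ X) (μ : Measure X) [IsFiniteMeasure μ]

theorem brE_antisymm (hinv : ∀ f : C(X, ℂ), ∫ x, f (T x) ∂μ = ∫ x, f x ∂μ)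
    (a b : (ℤ →₀ C(X, ℂ)) × ℂ) : brE T μ a b = -brE T μ b a :=
  Prod.ext (neg_sub _ _).symm (acoc_antisymm T μ hinv a.1 b.1)

theorem brE_add_left (a a' b : (ℤ →₀ C(X, ℂ)) × ℂ) :
    brE T μ (a + a') b = brE T μ a b + brE T μ a' b := by
  refine Prod.ext ?_ ?_
  · simp only [brE, abr, Prod.fst_add, amul_add_left, amul_add_right]
    abel
  · simp only [brE, Prod.fst_add, Prod.snd_add, acoc_eq_acocₗ, map_add, LinearMap.add_apply]

theorem brE_add_right (a b b' : (ℤ →₀ C(X, ℂ)) × ℂ) :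
    brE T μ a (b + b') = brE T μ a b + brE T μ a b' := by
  refine Prod.ext ?_ ?_
  · simp only [brE, abr, Prod.fst_add, amul_add_left, amul_add_right]
    abel
  · simp only [brE, Prod.fst_add, Prod.snd_add, acoc_eq_acocₗ, map_add]

theorem brE_smul_left (s : ℂ) (a b : (ℤ →₀ C(X, ℂ)) × ℂ) :
    brE T μ (s • a) b = s • brE T μ a b := by
  refine Prod.ext ?_ ?_
  · simp only [brE, abr, Prod.smul_fst, amul_smul_left, amul_smul_right, smul_sub]
  · simp only [brE, Prod.smul_fst, Prod.smul_snd, acoc_eq_acocₗ, map_smul, LinearMap.smul_apply]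

theorem brE_smul_right (s : ℂ) (a b : (ℤ →₀ C(X, ℂ)) × ℂ) :
    brE T μ a (s • b) = s • brE T μ a b := by
  refine Prod.ext ?_ ?_
  · simp only [brE, abr, Prod.smul_fst, amul_smul_left, amul_smul_right, smul_sub]
  · simp only [brE, Prod.smul_fst, Prod.smul_snd, acoc_eq_acocₗ, map_smul]

theorem brE_jacobi (hinv : ∀ f : C(X, ℂ), ∫ x, f (T x) ∂μ = ∫ x, f x ∂μ)
    (a b c : (ℤ →₀ C(X, ℂ)) × ℂ) :
    brE T μ (brE T μ a b) c + brE T μ (brE T μ b c) a + brE T μ (brE T μ c a) b = 0 :=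
  Prod.ext (commutator_jacobi (A := CrossedProduct T) a.1 b.1 c.1)
    (acoc_cocycle T μ hinv a.1 b.1 c.1)

end ExtendedBracket

theorem extended_bracket_lie_algebra_general [CompactSpace X] [BorelSpace X]
    (T : X ≃ₜ X) (μ : Measure X) [IsProbabilityMeasure μ]
    (hinv : ∀ f : C(X, ℂ), ∫ x, f (T x) ∂μ = ∫ x, f x ∂μ) :
    (∀ a b : (ℤ →₀ C(X, ℂ)) × ℂ, brE T μ a b = -brE T μ b a) ∧
    (∀ a a' b : (ℤ →₀ C(X, ℂ)) × ℂ, brE T μ (a + a') b = brE T μ a b + brE T μ a' b) ∧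
    (∀ (s : ℂ) (a b : (ℤ →₀ C(X, ℂ)) × ℂ), brE T μ (s • a) b = s • brE T μ a b) ∧
    (∀ a b b' : (ℤ →₀ C(X, ℂ)) × ℂ, brE T μ a (b + b') = brE T μ a b + brE T μ a b') ∧
    (∀ (s : ℂ) (a b : (ℤ →₀ C(X, ℂ)) × ℂ), brE T μ a (s • b) = s • brE T μ a b) ∧
    (∀ a b c : (ℤ →₀ C(X, ℂ)) × ℂ,
      brE T μ (brE T μ a b) c + brE T μ (brE T μ b c) a + brE T μ (brE T μ c a) b = 0) ∧
    (∀ (t : ℂ) (b : (ℤ →₀ C(X, ℂ)) × ℂ), brE T μ ((0 : ℤ →₀ C(X, ℂ)), t) b = 0) :=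
  ⟨brE_antisymm T μ hinv, brE_add_left T μ, brE_smul_left T μ, brE_add_right T μ,
    brE_smul_right T μ, brE_jacobi T μ hinv, brE_central T μ⟩

/-- the centrally extended bracket on `Ã(X,T) = A(X,T) ⊕ ℂc` is bilinear,
antisymmetric, satisfies the Jacobi identity, and `ℂc` lies in the center. -/
theorem extended_bracket_lie_algebra [CompactSpace X] [T2Space X] [BorelSpace X]
    (T : X ≃ₜ X) (μ : Measure X) [IsProbabilityMeasure μ]
    (hinv : ∀ f : C(X, ℂ), ∫ x, f (T x) ∂μ = ∫ x, f x ∂μ) :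
    (∀ a b : (ℤ →₀ C(X, ℂ)) × ℂ, brE T μ a b = -brE T μ b a) ∧
    (∀ a a' b : (ℤ →₀ C(X, ℂ)) × ℂ, brE T μ (a + a') b = brE T μ a b + brE T μ a' b) ∧
    (∀ (s : ℂ) (a b : (ℤ →₀ C(X, ℂ)) × ℂ), brE T μ (s • a) b = s • brE T μ a b) ∧
    (∀ a b b' : (ℤ →₀ C(X, ℂ)) × ℂ, brE T μ a (b + b') = brE T μ a b + brE T μ a b') ∧
    (∀ (s : ℂ) (a b : (ℤ →₀ C(X, ℂ)) × ℂ), brE T μ a (s • b) = s • brE T μ a b) ∧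
    (∀ a b c : (ℤ →₀ C(X, ℂ)) × ℂ,
      brE T μ (brE T μ a b) c + brE T μ (brE T μ b c) a + brE T μ (brE T μ c a) b = 0) ∧
    (∀ (t : ℂ) (b : (ℤ →₀ C(X, ℂ)) × ℂ), brE T μ ((0 : ℤ →₀ C(X, ℂ)), t) b = 0) :=
  extended_bracket_lie_algebra_general T μ hinv
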